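/- arXiv:math/0609104 — 3 statements merged into one kernel-verified Lean document; each statement's English description precedes it below -/
import Mathlib

section
/- Every solution p of the fuzzy relation equation p ∘ Q = r satisfies p_j ≤ p̂_j for all j ∈ J; that is, the vector p̂ defined by p̂_j = min_{k ∈ K} σ(q_{jk}, r_k) is an upper bound for the solution set S(Q, r). -/
/-- `σ(q, t) = t` if `q > t`, and `σ(q, t) = 1` otherwise. -/
noncomputable def sigmaOp (q t : ℝ) : ℝ := if t < q then t else 1

/-- The candidate maximum solution `p̂` with `p̂_j = min_{k ∈ K} σ(q_{jk}, r_k)`. -/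
noncomputable def pHat {J K : Type*} [Fintype K] [Nonempty K]
    (Q : J → K → ℝ) (r : K → ℝ) : J → ℝ :=
  fun j => Finset.univ.inf' Finset.univ_nonempty (fun k => sigmaOp (Q j k) (r k))

/-- `p` is a solution of the fuzzy relation equation `p ∘ Q = r`: `p` has entries in
`[0,1]` and `max_{j ∈ J} min (p_j) (q_{jk}) = r_k` for every `k ∈ K`. -/
def IsFREsolution {J K : Type*} [Fintype J] [Nonempty J]
    (Q : J → K → ℝ) (r : K → ℝ) (p : J → ℝ) : Prop :=
  (∀ j, p j ∈ Set.Icc (0 : ℝ) 1) ∧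
    ∀ k, Finset.univ.sup' Finset.univ_nonempty (fun j => min (p j) (Q j k)) = r k

/-- Every solution `p` of the fuzzy relation equation `p ∘ Q = r`
satisfies `p_j ≤ p̂_j` for all `j`; the vector `p̂` is an upper bound for the
solution set `S(Q, r)`. -/
theorem solution_le_pHat
    {J K : Type*} [Fintype J] [Nonempty J] [Fintype K] [Nonempty K]
    (Q : J → K → ℝ) (r : K → ℝ)
    (hQ : ∀ j k, Q j k ∈ Set.Icc (0 : ℝ) 1)
    (hr : ∀ k, r k ∈ Set.Icc (0 : ℝ) 1)
    (p : J → ℝ) (hp : IsFREsolution Q r p) :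
    ∀ j, p j ≤ pHat Q r j := by
  intro j
  apply Finset.le_inf'
  intro k _
  unfold sigmaOp
  split_ifs with h
  · -- need p j ≤ r k
    by_contra hlt
    push_neg at hlt
    have hle : min (p j) (Q j k) ≤ r k := by
      rw [← hp.2 k]
      exact Finset.le_sup' (fun j => min (p j) (Q j k)) (Finset.mem_univ j)
    have : r k < min (p j) (Q j k) := lt_min hlt h
    linarith
  · exact (hp.1 j).2
end

section
/- The solution set S(Q, r) of the fuzzy relation equation p ∘ Q = r is nonempty if and only if the vector p̂ (defined by p̂_j = min_{k ∈ K} σ(q_{jk}, r_k)) is itself a solution; in that case p̂ is the maximum solution. In other words, the existence of the maximum solution p̂ determined by this formula is a necessary and sufficient condition for S(Q, r) ≠ ∅. -/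
/-- Any solution is bounded above by `p̂`. -/
lemma le_pHat_of_solution {J K : Type*} [Fintype J] [Nonempty J] [Fintype K] [Nonempty K]
    (Q : J → K → ℝ) (r : K → ℝ) (p : J → ℝ) (hp : IsFREsolution Q r p) :
    ∀ j, p j ≤ pHat Q r j := by
  intro j
  apply Finset.le_inf'
  intro k _
  unfold sigmaOp
  split_ifs with h
  · -- r k < Q j k; show p j ≤ r k
    by_contra hlt
    push_neg at hlt
    have hle : min (p j) (Q j k) ≤ r k := by
      rw [← hp.2 k]
      exact Finset.le_sup' (fun j => min (p j) (Q j k)) (Finset.mem_univ j)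
    have : r k < min (p j) (Q j k) := lt_min hlt h
    linarith
  · exact (hp.1 j).2

/-- The solution set `S(Q, r)` is nonempty iff `p̂` is itself a solution,
in which case `p̂` is the maximum solution. -/
theorem solution_set_nonempty_iff_pHat_solution
    {J K : Type*} [Fintype J] [Nonempty J] [Fintype K] [Nonempty K]
    (Q : J → K → ℝ) (r : K → ℝ)
    (hQ : ∀ j k, Q j k ∈ Set.Icc (0 : ℝ) 1)
    (hr : ∀ k, r k ∈ Set.Icc (0 : ℝ) 1) :
    ((∃ p, IsFREsolution Q r p) ↔ IsFREsolution Q r (pHat Q r)) ∧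
      (∀ p, IsFREsolution Q r p → ∀ j, p j ≤ pHat Q r j) := by
  have hσmem : ∀ j k, sigmaOp (Q j k) (r k) ∈ Set.Icc (0 : ℝ) 1 := by
    intro j k
    unfold sigmaOp
    split_ifs
    · exact hr k
    · exact ⟨zero_le_one, le_refl 1⟩
  have hmem : ∀ j, pHat Q r j ∈ Set.Icc (0 : ℝ) 1 := by
    intro j
    constructor
    · exact Finset.le_inf' _ _ (fun k _ => (hσmem j k).1)
    · obtain ⟨k⟩ := ‹Nonempty K›
      exact le_trans (Finset.inf'_le _ (Finset.mem_univ k)) (hσmem j k).2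
  refine ⟨⟨?_, fun h => ⟨_, h⟩⟩, fun p hp => le_pHat_of_solution Q r p hp⟩
  rintro ⟨p, hp⟩
  refine ⟨hmem, fun k => le_antisymm ?_ ?_⟩
  · apply Finset.sup'_le
    intro j _
    by_cases h : r k < Q j k
    · calc min (pHat Q r j) (Q j k) ≤ pHat Q r j := min_le_left _ _
        _ ≤ sigmaOp (Q j k) (r k) := Finset.inf'_le _ (Finset.mem_univ k)
        _ = r k := if_pos h
    · push_neg at h
      exact le_trans (min_le_right _ _) h
  · rw [← hp.2 k]
    apply Finset.sup'_le
    intro j _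
    refine le_trans ?_ (Finset.le_sup' (fun j => min (pHat Q r j) (Q j k)) (Finset.mem_univ j))
    exact min_le_min (le_pHat_of_solution Q r p hp j) le_rfl
end

section
/- If p is a solution of the fuzzy relation equation p ∘ Q = r and p' is any vector with p_j ≤ p'_j ≤ p̂_j for all j ∈ J, then p' is also a solution of p ∘ Q = r. Hence the solution set S(Q, r) is the union of the order intervals [p, p̂] taken over its elements p, all sharing the common maximum p̂. -/
/-- If `p` is a solution of `p ∘ Q = r` and `p'` is any vector with
`p ≤ p' ≤ p̂` entrywise, then `p'` is also a solution; so `S(Q, r)` is the union of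
the order intervals `[p, p̂]` over its elements `p`. -/
theorem interval_between_solution_and_pHat_is_solution
    {J K : Type*} [Fintype J] [Nonempty J] [Fintype K] [Nonempty K]
    (Q : J → K → ℝ) (r : K → ℝ)
    (hQ : ∀ j k, Q j k ∈ Set.Icc (0 : ℝ) 1)
    (hr : ∀ k, r k ∈ Set.Icc (0 : ℝ) 1)
    (p p' : J → ℝ) (hp : IsFREsolution Q r p)
    (hlow : ∀ j, p j ≤ p' j) (hhigh : ∀ j, p' j ≤ pHat Q r j) :
    IsFREsolution Q r p' := by
  obtain ⟨hp01, hpeq⟩ := hp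
  have hphat_le : ∀ j k, pHat Q r j ≤ sigmaOp (Q j k) (r k) := fun j k =>
    Finset.inf'_le _ (Finset.mem_univ k)
  constructor
  · intro j
    refine ⟨le_trans (hp01 j).1 (hlow j), le_trans (hhigh j) ?_⟩
    refine le_trans (hphat_le j (Classical.arbitrary K)) ?_
    unfold sigmaOp
    split
    · exact (hr _).2
    · exact le_refl 1
  · intro k
    apply le_antisymm
    · apply Finset.sup'_le
      intro j _
      have h1 : p' j ≤ sigmaOp (Q j k) (r k) := le_trans (hhigh j) (hphat_le j k)
      by_cases hc : r k < Q j k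
      · have : sigmaOp (Q j k) (r k) = r k := if_pos hc
        exact le_trans (min_le_left _ _) (this ▸ h1)
      · exact le_trans (min_le_right _ _) (not_lt.mp hc)
    · rw [← hpeq k]
      apply Finset.sup'_le
      intro j _
      exact le_trans (min_le_min (hlow j) le_rfl)
        (Finset.le_sup' (fun j => min (p' j) (Q j k)) (Finset.mem_univ j))
end
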